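/- Suppose θ : M → (0,∞) is a smooth strictly positive function with Φ(x, θ(x)) = x for all x ∈ M and θ(Φ(x,t)) = θ(x) for all x ∈ M, t ∈ ℝ (θ is constant along orbits of F). If the vector field θF is complete with global flow Ψ, then Ψ(x, 1) = x for all x ∈ M; that is, the shift map of θF is periodic with period function identically 1. -/

import Mathlib

open scoped Manifold

/-!
Since `θ` is invariant under `Φ`, `dθ(F) = 0`, so `θ` is also constant along the orbits of `Ψ`.
Hence `t ↦ Ψ(x, t)` is an integral curve of the constant multiple `θ(x) F`, and so it equals
`t ↦ Φ(x, θ(x) t)`: the curve `t ↦ Φ(Ψ(x, t), -θ(x) t)` has zero derivative because the time-`s`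
maps of `Φ` carry `F` to `F`. At `t = 1` this gives `Ψ(x, 1) = Φ(x, θ(x)) = x`.
-/

section

variable {E : Type*} [NormedAddCommGroup E] [NormedSpace ℝ E]
  {H : Type*} [TopologicalSpace H] {I : ModelWithCorners ℝ E H}
  {M : Type*} [TopologicalSpace M] [ChartedSpace H M]

theorem isLocallyConstant_of_mfderiv_eq_zero [IsManifold I 1 M]
    {E' : Type*} [NormedAddCommGroup E'] [NormedSpace ℝ E'] {f : E' → M}
    (hf : MDifferentiable 𝓘(ℝ, E') I f) (hf' : ∀ x, mfderiv 𝓘(ℝ, E') I f x = 0) :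
    IsLocallyConstant f := by
  refine (IsLocallyConstant.iff_eventually_eq f).2 fun x₀ => ?_
  set e := extChartAt I (f x₀)
  have hU : IsOpen (f ⁻¹' (chartAt H (f x₀)).source) :=
    (chartAt H (f x₀)).open_source.preimage hf.continuous
  have hchart : ∀ x ∈ f ⁻¹' (chartAt H (f x₀)).source,
      HasFDerivAt (e ∘ f) (0 : E' →L[ℝ] E) x := fun x hx => by
    have h0 : HasMFDerivAt 𝓘(ℝ, E') I f x 0 := hf' x ▸ (hf x).hasMFDerivAt
    have := ((hasMFDerivAt_extChartAt (I := I) hx).comp x h0).hasFDerivAt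
    exact this.congr_fderiv (ContinuousLinearMap.ext fun _ => ContinuousLinearMap.map_zero _)
  have hfiber := hU.isOpen_inter_preimage_of_fderiv_eq_zero
    (fun x hx => (hchart x hx).differentiableAt.differentiableWithinAt)
    (fun x hx => (hchart x hx).fderiv) {e (f x₀)}
  filter_upwards [hfiber.mem_nhds ⟨mem_chart_source H (f x₀), rfl⟩] with x ⟨hx, hex⟩
  exact e.injOn (by simpa [e] using hx) (by simp [e]) hex

theorem eq_of_mfderiv_apply_one_eq_zero [IsManifold I 1 M] {γ : ℝ → M}
    (hγ : MDifferentiable 𝓘(ℝ, ℝ) I γ) (hγ' : ∀ t, mfderiv 𝓘(ℝ, ℝ) I γ t (1 : ℝ) = 0) (s t : ℝ) :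
    γ s = γ t :=
  (isLocallyConstant_of_mfderiv_eq_zero hγ fun t =>
    ContinuousLinearMap.ext_ring (hγ' t)).apply_eq_of_preconnectedSpace s t

variable (F : (x : M) → TangentSpace I x) {Φ : M → ℝ → M}

theorem mfderiv_flow_apply_vectorField
    (hΦ : MDifferentiable (I.prod 𝓘(ℝ, ℝ)) I (fun p : M × ℝ => Φ p.1 p.2))
    (hΦ_zero : ∀ x, Φ x 0 = x) (hΦ_add : ∀ x t s, Φ (Φ x t) s = Φ x (t + s))
    (hΦ_deriv : ∀ x t, mfderiv 𝓘(ℝ, ℝ) I (Φ x) t (1 : ℝ) = F (Φ x t)) (x : M) (s : ℝ) :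
    mfderiv I I (Φ · s) x (F x) = F (Φ x s) := by
  have hΦs : MDifferentiable I I (Φ · s) :=
    hΦ.comp (mdifferentiable_id.prodMk mdifferentiable_const)
  have hΦx : ∀ t, MDifferentiableAt 𝓘(ℝ, ℝ) I (Φ x) t :=
    hΦ.comp (mdifferentiable_const.prodMk mdifferentiable_id)
  have hshift : MDifferentiableAt 𝓘(ℝ, ℝ) 𝓘(ℝ, ℝ) (· + s) 0 :=
    (differentiableAt_id.add_const s).mdifferentiableAt
  have hcomm : (Φ · s) ∘ Φ x = Φ x ∘ (· + s) := funext fun t => hΦ_add x t s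
  have hleft : mfderiv 𝓘(ℝ, ℝ) I ((Φ · s) ∘ Φ x) 0 1 = mfderiv I I (Φ · s) x (F x) := by
    rw [mfderiv_comp 0 (hΦs _) (hΦx 0)]
    change mfderiv I I (Φ · s) (Φ x 0) (mfderiv 𝓘(ℝ, ℝ) I (Φ x) 0 (1 : ℝ)) = _
    rw [hΦ_deriv, hΦ_zero]
  have hright : mfderiv 𝓘(ℝ, ℝ) I (Φ x ∘ (· + s)) 0 1 = F (Φ x s) := by
    rw [mfderiv_comp 0 (hΦx _) hshift]
    change mfderiv 𝓘(ℝ, ℝ) I (Φ x) (0 + s) (mfderiv 𝓘(ℝ, ℝ) 𝓘(ℝ, ℝ) (· + s) 0 (1 : ℝ)) = _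
    rw [mfderiv_eq_fderiv, fderiv_add_const, fderiv_fun_id, zero_add]
    exact hΦ_deriv x s
  rw [← hleft, hcomm, hright]

theorem mfderiv_apply_vectorField_eq_zero_of_flow_invariant
    {E' : Type*} [NormedAddCommGroup E'] [NormedSpace ℝ E'] {θ : M → E'}
    (hθ : MDifferentiable I 𝓘(ℝ, E') θ)
    (hΦ : MDifferentiable (I.prod 𝓘(ℝ, ℝ)) I (fun p : M × ℝ => Φ p.1 p.2))
    (hΦ_zero : ∀ x, Φ x 0 = x)
    (hΦ_deriv : ∀ x t, mfderiv 𝓘(ℝ, ℝ) I (Φ x) t (1 : ℝ) = F (Φ x t))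
    (hθ_orbit : ∀ x t, θ (Φ x t) = θ x) (x : M) :
    mfderiv I 𝓘(ℝ, E') θ x (F x) = 0 := by
  have hΦx : MDifferentiableAt 𝓘(ℝ, ℝ) I (Φ x) 0 :=
    hΦ.comp (mdifferentiable_const.prodMk mdifferentiable_id) 0
  have hconst : θ ∘ Φ x = fun _ => θ x := funext (hθ_orbit x)
  have h := congrArg (fun g => mfderiv 𝓘(ℝ, ℝ) 𝓘(ℝ, E') g 0 (1 : ℝ)) hconst
  simp only [mfderiv_const] at h
  rw [mfderiv_comp 0 (hθ _) hΦx] at h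
  change mfderiv I 𝓘(ℝ, E') θ (Φ x 0) (mfderiv 𝓘(ℝ, ℝ) I (Φ x) 0 (1 : ℝ)) = 0 at h
  rwa [hΦ_deriv, hΦ_zero] at h

theorem comp_eq_of_mfderiv_apply_vectorField_eq_zero
    {E' : Type*} [NormedAddCommGroup E'] [NormedSpace ℝ E'] {θ : M → E'}
    (hθ : MDifferentiable I 𝓘(ℝ, E') θ) (hθF : ∀ x, mfderiv I 𝓘(ℝ, E') θ x (F x) = 0)
    {γ : ℝ → M} (hγ : MDifferentiable 𝓘(ℝ, ℝ) I γ) {c : ℝ → ℝ}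
    (hγ' : ∀ t, mfderiv 𝓘(ℝ, ℝ) I γ t (1 : ℝ) = c t • F (γ t)) (s t : ℝ) :
    θ (γ s) = θ (γ t) := by
  refine eq_of_mfderiv_apply_one_eq_zero (hθ.comp hγ) (fun t => ?_) s t
  rw [mfderiv_comp t (hθ _) (hγ t)]
  change mfderiv I 𝓘(ℝ, E') θ (γ t) (mfderiv 𝓘(ℝ, ℝ) I γ t (1 : ℝ)) = 0
  rw [hγ', map_smul, hθF, smul_zero]

theorem mfderiv_flow_comp_apply_one
    (hΦ : MDifferentiable (I.prod 𝓘(ℝ, ℝ)) I (fun p : M × ℝ => Φ p.1 p.2))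
    (hΦ_deriv : ∀ x t, mfderiv 𝓘(ℝ, ℝ) I (Φ x) t (1 : ℝ) = F (Φ x t))
    {γ : ℝ → M} {b : ℝ → ℝ} {t : ℝ} (hγ : MDifferentiableAt 𝓘(ℝ, ℝ) I γ t)
    (hb : DifferentiableAt ℝ b t) :
    mfderiv 𝓘(ℝ, ℝ) I (fun t => Φ (γ t) (b t)) t (1 : ℝ) =
      mfderiv I I (Φ · (b t)) (γ t) (mfderiv 𝓘(ℝ, ℝ) I γ t (1 : ℝ)) +
        deriv b t • F (Φ (γ t) (b t)) := by
  have hq : MDifferentiableAt 𝓘(ℝ, ℝ) (I.prod 𝓘(ℝ, ℝ)) (fun t => (γ t, b t)) t :=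
    hγ.prodMk hb.mdifferentiableAt
  change mfderiv 𝓘(ℝ, ℝ) I ((fun p : M × ℝ => Φ p.1 p.2) ∘ fun t => (γ t, b t)) t 1 = _
  rw [mfderiv_comp t (hΦ _) hq, ContinuousLinearMap.comp_apply, mfderiv_prod_eq_add_apply (hΦ _),
    hγ.mfderiv_prod hb.mdifferentiableAt]
  congr 1
  change mfderiv 𝓘(ℝ, ℝ) I (Φ (γ t)) (b t) (mfderiv 𝓘(ℝ, ℝ) 𝓘(ℝ, ℝ) b t (1 : ℝ)) = _
  have hb' : mfderiv 𝓘(ℝ, ℝ) 𝓘(ℝ, ℝ) b t (1 : ℝ) = deriv b t • (1 : ℝ) := by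
    rw [smul_eq_mul, mul_one, mfderiv_eq_fderiv]
    rfl
  rw [hb']
  erw [ContinuousLinearMap.map_smul, hΦ_deriv]

theorem eq_flow_of_mfderiv_eq_smul [IsManifold I 1 M]
    (hΦ : MDifferentiable (I.prod 𝓘(ℝ, ℝ)) I (fun p : M × ℝ => Φ p.1 p.2))
    (hΦ_zero : ∀ x, Φ x 0 = x) (hΦ_add : ∀ x t s, Φ (Φ x t) s = Φ x (t + s))
    (hΦ_deriv : ∀ x t, mfderiv 𝓘(ℝ, ℝ) I (Φ x) t (1 : ℝ) = F (Φ x t))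
    {γ : ℝ → M} (hγ : MDifferentiable 𝓘(ℝ, ℝ) I γ) {a : ℝ}
    (hγ' : ∀ t, mfderiv 𝓘(ℝ, ℝ) I γ t (1 : ℝ) = a • F (γ t)) (t : ℝ) :
    γ t = Φ (γ 0) (a * t) := by
  have hb : Differentiable ℝ fun t : ℝ => -(a * t) := by fun_prop
  have hpullback : ∀ t, Φ (γ t) (-(a * t)) = γ 0 := by
    intro t
    have hβ : MDifferentiable 𝓘(ℝ, ℝ) I fun t => Φ (γ t) (-(a * t)) := fun t =>
      (hΦ _).comp t ((hγ t).prodMk (hb t).mdifferentiableAt)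
    refine (eq_of_mfderiv_apply_one_eq_zero hβ (fun t => ?_) t 0).trans (by simp [hΦ_zero])
    rw [mfderiv_flow_comp_apply_one F hΦ hΦ_deriv (hγ t) (hb t), hγ', map_smul,
      mfderiv_flow_apply_vectorField F hΦ hΦ_zero hΦ_add hΦ_deriv, ← add_smul]
    simp
  calc γ t = Φ (γ t) (-(a * t) + a * t) := by rw [neg_add_cancel, hΦ_zero]
    _ = Φ (γ 0) (a * t) := by rw [← hΦ_add, hpullback]

end

theorem flow_of_theta_F_has_period_one_general
    {E : Type*} [NormedAddCommGroup E] [NormedSpace ℝ E]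
    {H : Type*} [TopologicalSpace H] {I : ModelWithCorners ℝ E H}
    {M : Type*} [TopologicalSpace M] [ChartedSpace H M] [IsManifold I (⊤ : ℕ∞) M]
    -- the smooth vector field `F`
    (F : (x : M) → TangentSpace I x)
    -- `Φ` is the global flow of `F`
    (Φ : M → ℝ → M)
    (hΦ_smooth : ContMDiff (I.prod 𝓘(ℝ, ℝ)) I (⊤ : ℕ∞) (fun p : M × ℝ => Φ p.1 p.2))
    (hΦ_zero : ∀ x, Φ x 0 = x)
    (hΦ_add : ∀ x t s, Φ (Φ x t) s = Φ x (t + s))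
    (hΦ_deriv : ∀ x t, mfderiv 𝓘(ℝ, ℝ) I (Φ x) t (1 : ℝ) = F (Φ x t))
    -- the smooth strictly positive period function `θ`, constant along orbits of `F`
    (θ : M → ℝ) (hθ : ContMDiff I 𝓘(ℝ, ℝ) (⊤ : ℕ∞) θ)
    (hθ_per : ∀ x, Φ x (θ x) = x)
    (hθ_orbit : ∀ x t, θ (Φ x t) = θ x)
    -- `Ψ` is the global flow of `θ • F`
    (Ψ : M → ℝ → M)
    (hΨ_smooth : ContMDiff (I.prod 𝓘(ℝ, ℝ)) I (⊤ : ℕ∞) (fun p : M × ℝ => Ψ p.1 p.2))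
    (hΨ_zero : ∀ x, Ψ x 0 = x)
    (hΨ_deriv : ∀ x t, mfderiv 𝓘(ℝ, ℝ) I (Ψ x) t (1 : ℝ) = θ (Ψ x t) • F (Ψ x t)) :
    ∀ x, Ψ x 1 = x := by
  intro x
  have hΦ := hΦ_smooth.mdifferentiable (by simp)
  have hθ' := hθ.mdifferentiable (by simp)
  have hΨx : MDifferentiable 𝓘(ℝ, ℝ) I (Ψ x) :=
    (hΨ_smooth.mdifferentiable (by simp)).comp (mdifferentiable_const.prodMk mdifferentiable_id)
  have hθF := mfderiv_apply_vectorField_eq_zero_of_flow_invariant F hθ' hΦ hΦ_zero hΦ_deriv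
    hθ_orbit
  have hθΨ (t : ℝ) : θ (Ψ x t) = θ x := by
    rw [comp_eq_of_mfderiv_apply_vectorField_eq_zero F hθ' hθF hΨx (c := fun t => θ (Ψ x t))
      (hΨ_deriv x) t 0, hΨ_zero]
  have hΨ_eq_Φ := eq_flow_of_mfderiv_eq_smul F hΦ hΦ_zero hΦ_add hΦ_deriv hΨx (a := θ x)
    (fun t => by rw [hΨ_deriv, hθΨ]) 1
  rw [hΨ_eq_Φ, hΨ_zero, mul_one, hθ_per]

/-- Suppose `θ : M → (0,∞)` is smooth, strictly positive, with
`Φ(x, θ(x)) = x` for all `x`, and constant along the orbits of `F`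
(`θ(Φ(x,t)) = θ(x)`).  If `θ • F` is complete with global flow `Ψ`, then `Ψ(x,1) = x`
for all `x`: the shift map of `θF` is periodic with period function identically `1`. -/
theorem flow_of_theta_F_has_period_one
    {E : Type*} [NormedAddCommGroup E] [NormedSpace ℝ E] [FiniteDimensional ℝ E]
    {H : Type*} [TopologicalSpace H] {I : ModelWithCorners ℝ E H}
    {M : Type*} [TopologicalSpace M] [ChartedSpace H M] [IsManifold I (⊤ : ℕ∞) M]
    -- the smooth vector field `F`
    (F : (x : M) → TangentSpace I x)
    (hF : ContMDiff I I.tangent (⊤ : ℕ∞) (fun x => (⟨x, F x⟩ : TangentBundle I M)))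
    -- `Φ` is the global flow of `F`
    (Φ : M → ℝ → M)
    (hΦ_smooth : ContMDiff (I.prod 𝓘(ℝ, ℝ)) I (⊤ : ℕ∞) (fun p : M × ℝ => Φ p.1 p.2))
    (hΦ_zero : ∀ x, Φ x 0 = x)
    (hΦ_add : ∀ x t s, Φ (Φ x t) s = Φ x (t + s))
    (hΦ_deriv : ∀ x t, mfderiv 𝓘(ℝ, ℝ) I (Φ x) t (1 : ℝ) = F (Φ x t))
    -- the smooth strictly positive period function `θ`, constant along orbits of `F`
    (θ : M → ℝ) (hθ : ContMDiff I 𝓘(ℝ, ℝ) (⊤ : ℕ∞) θ) (hθ_pos : ∀ x, 0 < θ x)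
    (hθ_per : ∀ x, Φ x (θ x) = x)
    (hθ_orbit : ∀ x t, θ (Φ x t) = θ x)
    -- `Ψ` is the global flow of `θ • F`
    (Ψ : M → ℝ → M)
    (hΨ_smooth : ContMDiff (I.prod 𝓘(ℝ, ℝ)) I (⊤ : ℕ∞) (fun p : M × ℝ => Ψ p.1 p.2))
    (hΨ_zero : ∀ x, Ψ x 0 = x)
    (hΨ_add : ∀ x t s, Ψ (Ψ x t) s = Ψ x (t + s))
    (hΨ_deriv : ∀ x t, mfderiv 𝓘(ℝ, ℝ) I (Ψ x) t (1 : ℝ) = θ (Ψ x t) • F (Ψ x t)) :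
    ∀ x, Ψ x 1 = x :=
  flow_of_theta_F_has_period_one_general F Φ hΦ_smooth hΦ_zero hΦ_add hΦ_deriv θ hθ hθ_per hθ_orbit
    Ψ hΨ_smooth hΨ_zero hΨ_deriv
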